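/- Let p be an odd prime and suppose there exist a, δ in F_p with δ² = 1, 4a³ − 8a² + 8a − 3 = 0, and t := δ(2a−1)i (with i² = −1) a root of p₊ or p₋ where p_±(t) = t(t²−2) ± (t²−1). Then p = 41. -/

import Mathlib

/-!
Since `p₊(t) p₋(t) = s³ - 5s² + 6s - 1` with `s = t²`, a root `t` of `p₊` or `p₋` gives a root
`s = t²` of this cubic, and for `t = δ(2a-1)i` we have `t² = -(2a-1)²`. So `a` is a common root of
`4a³ - 8a² + 8a - 3` and of the cubic evaluated at `-(2a-1)²`; an explicit Bézout identity for
these two integer polynomials shows `41 = 0`, i.e. the characteristic `p` divides `41`.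
-/

/-- The cubic whose roots are the squares of the roots of `p₊` and `p₋`. -/
def sqRootCubic {R : Type*} [CommRing R] (s : R) : R := s ^ 3 - 5 * s ^ 2 + 6 * s - 1

section

variable {R : Type*} [CommRing R]

theorem sqRootCubic_sq (t : R) :
    sqRootCubic (t ^ 2) = (t * (t ^ 2 - 2) + (t ^ 2 - 1)) * (t * (t ^ 2 - 2) - (t ^ 2 - 1)) := by
  unfold sqRootCubic
  ring

theorem sqRootCubic_sq_eq_zero {t : R}
    (h : t * (t ^ 2 - 2) + (t ^ 2 - 1) = 0 ∨ t * (t ^ 2 - 2) - (t ^ 2 - 1) = 0) :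
    sqRootCubic (t ^ 2) = 0 := by
  rw [sqRootCubic_sq]
  rcases h with h | h <;> simp [h]

theorem sq_mul_mul_eq_neg_sq {d b i : R} (hd : d ^ 2 = 1) (hi : i ^ 2 = -1) :
    (d * b * i) ^ 2 = -b ^ 2 := by
  linear_combination b ^ 2 * i ^ 2 * hd + b ^ 2 * hi

theorem forty_one_eq_zero_of_sqRootCubic {a : R} (ha : 4 * a ^ 3 - 8 * a ^ 2 + 8 * a - 3 = 0)
    (h : sqRootCubic (-(2 * a - 1) ^ 2) = 0) : (41 : R) = 0 := by
  unfold sqRootCubic at h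
  linear_combination (112 - 540 * a + 928 * a ^ 2 - 1168 * a ^ 3 + 704 * a ^ 4
    - 320 * a ^ 5) * ha - (29 - 24 * a + 20 * a ^ 2) * h

end

theorem prime_eq_fortyone_general
    (p : ℕ) (hp : p.Prime)
    (K : Type*) [Field K] [CharP K p]
    (a δ : ZMod p) (hδ : δ ^ 2 = 1)
    (ha : 4 * a ^ 3 - 8 * a ^ 2 + 8 * a - 3 = 0)
    (i : K) (hi : i ^ 2 = -1)
    (t : K)
    (ht : t = (ZMod.castHom (dvd_refl p) K δ) *
        (2 * (ZMod.castHom (dvd_refl p) K a) - 1) * i)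
    (hroot : t * (t ^ 2 - 2) + (t ^ 2 - 1) = 0 ∨
      t * (t ^ 2 - 2) - (t ^ 2 - 1) = 0) :
    p = 41 := by
  set φ := ZMod.castHom (dvd_refl p) K
  have hδK : φ δ ^ 2 = 1 := by rw [← map_pow, hδ, map_one]
  have haK : 4 * φ a ^ 3 - 8 * φ a ^ 2 + 8 * φ a - 3 = 0 := by
    simpa only [map_sub, map_add, map_mul, map_pow, map_ofNat, map_zero] using congrArg φ ha
  have ht_sq : t ^ 2 = -(2 * φ a - 1) ^ 2 := ht ▸ sq_mul_mul_eq_neg_sq hδK hi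
  have h41 : ((41 : ℕ) : K) = 0 := by
    exact_mod_cast forty_one_eq_zero_of_sqRootCubic haK (ht_sq ▸ sqRootCubic_sq_eq_zero hroot)
  have hdvd : p ∣ 41 := (CharP.cast_eq_zero_iff K p 41).mp h41
  exact (Nat.prime_dvd_prime_iff_eq hp (by norm_num)).mp hdvd

/-- Let `p` be an odd prime and suppose there exist `a, δ ∈ F_p`
with `δ² = 1`, `4a³ − 8a² + 8a − 3 = 0`, and `t := δ(2a−1)i` (with `i² = −1`, in
`F_p` or an extension field `K`) a root of `p₊` or `p₋`, where
`p_±(t) = t(t²−2) ± (t²−1)`. Then `p = 41`. -/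
theorem prime_eq_fortyone
    (p : ℕ) (hp : p.Prime) (hodd : p ≠ 2)
    (K : Type*) [Field K] [CharP K p]
    (a δ : ZMod p) (hδ : δ ^ 2 = 1)
    (ha : 4 * a ^ 3 - 8 * a ^ 2 + 8 * a - 3 = 0)
    (i : K) (hi : i ^ 2 = -1)
    (t : K)
    (ht : t = (ZMod.castHom (dvd_refl p) K δ) *
        (2 * (ZMod.castHom (dvd_refl p) K a) - 1) * i)
    (hroot : t * (t ^ 2 - 2) + (t ^ 2 - 1) = 0 ∨
      t * (t ^ 2 - 2) - (t ^ 2 - 1) = 0) :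
    p = 41 :=
  prime_eq_fortyone_general p hp K a δ hδ ha i hi t ht hroot
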